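/- arXiv:1106.6347 — 3 statements merged into one kernel-verified Lean document; each statement's English description precedes it below -/
import Mathlib

section
/- Let a and b be chosen independently and uniformly at random from {1,...,N}. Then the probability that gcd(a,b) = 1 is strictly greater than 1/2. -/
open Finset

/-- Telescoping sum `∑_{k=2}^{n+1} 1/(k(k+1)) = 1/2 - 1/(n+2)`. -/
lemma tele_sum (n : ℕ) :
    ∑ k ∈ Finset.Icc 2 (n + 1), (1 : ℝ) / (k * (k + 1)) = 1 / 2 - 1 / (n + 2) := by
  induction n with
  | zero => norm_num
  | succ m ih =>
    rw [Finset.sum_Icc_succ_top (by omega : 2 ≤ m + 1 + 1), ih]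
    have h1 : ((m : ℝ) + 2) ≠ 0 := by positivity
    have h2 : ((m : ℝ) + 1 + 1 + 1) ≠ 0 := by positivity
    push_cast
    field_simp
    ring

/-- For a finite set of primes, `∑ 1/p² ≤ 35/72`. -/
lemma prime_sq_sum_le (P : Finset ℕ) (hP : ∀ p ∈ P, Nat.Prime p) :
    ∑ p ∈ P, (1 : ℝ) / (p : ℝ) ^ 2 ≤ 35 / 72 := by
  have hnn : ∀ p : ℕ, (0 : ℝ) ≤ 1 / (p : ℝ) ^ 2 := fun p => by positivity
  set R : Finset ℕ := insert 2 (insert 3 P) with hR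
  have hsub : P ⊆ R := by intro x hx; simp [hR, hx]
  have hle : ∑ p ∈ P, (1 : ℝ) / (p : ℝ) ^ 2 ≤ ∑ p ∈ R, (1 : ℝ) / (p : ℝ) ^ 2 :=
    Finset.sum_le_sum_of_subset_of_nonneg hsub (fun i _ _ => hnn i)
  refine hle.trans ?_
  have h2R : 2 ∈ R := by simp [hR]
  have h3R : 3 ∈ R.erase 2 := by simp [hR]
  rw [← Finset.add_sum_erase R _ h2R, ← Finset.add_sum_erase (R.erase 2) _ h3R]
  set Q : Finset ℕ := (R.erase 2).erase 3 with hQ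
  have hQP : ∀ p ∈ Q, Nat.Prime p ∧ 5 ≤ p ∧ p % 2 = 1 := by
    intro p hp
    simp only [hQ, Finset.mem_erase, hR, Finset.mem_insert] at hp
    obtain ⟨h3, h2, hh⟩ := hp
    have hprime : Nat.Prime p := by
      rcases hh with h | h | h
      · exact absurd h h2
      · exact absurd h h3
      · exact hP p h
    have hodd : p % 2 = 1 := Nat.odd_iff.mp (hprime.odd_of_ne_two h2)
    have h2le : 2 ≤ p := hprime.two_le
    exact ⟨hprime, by omega, hodd⟩
  set g : ℕ → ℝ := fun k => 1 / 4 * (1 / ((k : ℝ) * ((k : ℝ) + 1))) with hg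
  have key : ∑ p ∈ Q, (1 : ℝ) / (p : ℝ) ^ 2 ≤ 1 / 8 := by
    have hstep : ∑ p ∈ Q, (1 : ℝ) / (p : ℝ) ^ 2 ≤ ∑ p ∈ Q, g (p / 2) := by
      apply Finset.sum_le_sum
      intro p hp
      obtain ⟨hprime, h5, hodd⟩ := hQP p hp
      obtain ⟨k, hpk⟩ : ∃ k, p = 2 * k + 1 := ⟨p / 2, by omega⟩
      have hk2 : 2 ≤ k := by omega
      have hdiv : p / 2 = k := by omega
      have hkR : (2 : ℝ) ≤ (k : ℝ) := by exact_mod_cast hk2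
      have hpR : (p : ℝ) = 2 * (k : ℝ) + 1 := by rw [hpk]; push_cast; ring
      rw [hg, hdiv, hpR]
      simp only []
      have heq : (1 : ℝ) / 4 * (1 / ((k : ℝ) * ((k : ℝ) + 1)))
          = 1 / (4 * ((k : ℝ) * ((k : ℝ) + 1))) := by
        have hk0 : (k : ℝ) ≠ 0 := by positivity
        have hk1 : (k : ℝ) + 1 ≠ 0 := by positivity
        field_simp
      rw [heq]
      apply one_div_le_one_div_of_le (by positivity)
      nlinarith [hkR]
    refine hstep.trans ?_
    have hinj : ∀ x ∈ Q, ∀ y ∈ Q, x / 2 = y / 2 → x = y := by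
      intro x hx y hy h
      obtain ⟨_, _, hox⟩ := hQP x hx
      obtain ⟨_, _, hoy⟩ := hQP y hy
      omega
    rw [← Finset.sum_image (g := fun p => p / 2) (f := g) hinj]
    set M : ℕ := Q.sup id with hM
    have himg : Q.image (fun p => p / 2) ⊆ Finset.Icc 2 (M + 1) := by
      intro k hk
      obtain ⟨p, hp, rfl⟩ := Finset.mem_image.mp hk
      obtain ⟨_, h5, _⟩ := hQP p hp
      have hpM : p ≤ M := Finset.le_sup (f := id) hp
      simp only [Finset.mem_Icc]
      omega
    have hmono := Finset.sum_le_sum_of_subset_of_nonneg (f := g) himg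
      (fun i _ _ => by rw [hg]; positivity)
    refine hmono.trans ?_
    simp only [hg]
    rw [← Finset.mul_sum, tele_sum M]
    have : (0 : ℝ) < (M : ℝ) + 2 := by positivity
    have h1 : (0 : ℝ) ≤ 1 / ((M : ℝ) + 2) := by positivity
    linarith
  push_cast
  linarith [key]

/-- If `a` and `b` are chosen independently and uniformly at random from `{1,…,N}`,
then the probability that `gcd(a,b) = 1` is strictly greater than `1/2`. -/
theorem coprime_prob_gt_half (N : ℕ) (hN : 0 < N) :
    (1 : ℝ) / 2 <
      ((((Finset.Icc 1 N) ×ˢ (Finset.Icc 1 N)).filter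
        (fun p => Nat.gcd p.1 p.2 = 1)).card : ℝ) / (N ^ 2) := by
  classical
  set S := (Finset.Icc 1 N) ×ˢ (Finset.Icc 1 N) with hS
  set bad := S.filter (fun q => ¬ Nat.gcd q.1 q.2 = 1) with hbadDef
  have hScard : S.card = N ^ 2 := by
    simp [hS, Nat.card_Icc, sq]
  have hsplit : (S.filter (fun p => Nat.gcd p.1 p.2 = 1)).card + bad.card = N ^ 2 := by
    rw [hbadDef, Finset.card_filter_add_card_filter_not, hScard]
  set P : Finset ℕ := (Finset.Icc 2 N).filter Nat.Prime with hPdef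
  have hsubset : bad ⊆ P.biUnion (fun p => S.filter (fun q => p ∣ q.1 ∧ p ∣ q.2)) := by
    intro q hq
    obtain ⟨hqS, hg⟩ := Finset.mem_filter.mp hq
    obtain ⟨ha, hb⟩ := Finset.mem_product.mp hqS
    obtain ⟨ha1, haN⟩ := Finset.mem_Icc.mp ha
    have hg0 : 0 < Nat.gcd q.1 q.2 := Nat.gcd_pos_of_pos_left _ (by omega)
    have hg2 : Nat.gcd q.1 q.2 ≠ 1 := hg
    set g := Nat.gcd q.1 q.2 with hgdef
    have hp : (g.minFac).Prime := Nat.minFac_prime hg2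
    have hpa : g.minFac ∣ q.1 := (Nat.minFac_dvd g).trans (Nat.gcd_dvd_left _ _)
    have hpb : g.minFac ∣ q.2 := (Nat.minFac_dvd g).trans (Nat.gcd_dvd_right _ _)
    have hgN : g ≤ N := le_trans (Nat.le_of_dvd (by omega) (Nat.gcd_dvd_left _ _)) haN
    have hpN : g.minFac ≤ N := le_trans (Nat.minFac_le hg0) hgN
    apply Finset.mem_biUnion.mpr
    exact ⟨g.minFac, Finset.mem_filter.mpr ⟨Finset.mem_Icc.mpr ⟨hp.two_le, hpN⟩, hp⟩,
      Finset.mem_filter.mpr ⟨hqS, hpa, hpb⟩⟩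
  have hcardS_p : ∀ p ∈ P, (S.filter (fun q => p ∣ q.1 ∧ p ∣ q.2)).card = (N / p) ^ 2 := by
    intro p hp
    have : S.filter (fun q => p ∣ q.1 ∧ p ∣ q.2)
        = ((Finset.Icc 1 N).filter (p ∣ ·)) ×ˢ ((Finset.Icc 1 N).filter (p ∣ ·)) := by
      rw [hS, Finset.filter_product]
    rw [this, Finset.card_product]
    have hIcc : Finset.Icc 1 N = Finset.Ioc 0 N := rfl
    rw [hIcc, Nat.Ioc_filter_dvd_card_eq_div, sq]
  have hbadcard : (bad.card : ℝ) ≤ 35 / 72 * (N : ℝ) ^ 2 := by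
    have h1 : bad.card ≤ ∑ p ∈ P, (N / p) ^ 2 := by
      calc bad.card ≤ (P.biUnion (fun p => S.filter (fun q => p ∣ q.1 ∧ p ∣ q.2))).card :=
            Finset.card_le_card hsubset
        _ ≤ ∑ p ∈ P, (S.filter (fun q => p ∣ q.1 ∧ p ∣ q.2)).card := Finset.card_biUnion_le
        _ = ∑ p ∈ P, (N / p) ^ 2 := Finset.sum_congr rfl hcardS_p
    have h2 : ((∑ p ∈ P, (N / p) ^ 2 : ℕ) : ℝ) ≤ ∑ p ∈ P, (N : ℝ) ^ 2 * (1 / (p : ℝ) ^ 2) := by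
      push_cast
      apply Finset.sum_le_sum
      intro p hp
      have hp2 : 2 ≤ p := (Finset.mem_Icc.mp (Finset.mem_filter.mp hp).1).1
      have hp0 : (0 : ℝ) < (p : ℝ) := by exact_mod_cast Nat.lt_of_lt_of_le (by norm_num) hp2
      have hdiv : ((N / p : ℕ) : ℝ) ≤ (N : ℝ) / (p : ℝ) := Nat.cast_div_le
      have hnn : (0 : ℝ) ≤ ((N / p : ℕ) : ℝ) := Nat.cast_nonneg _
      have : ((N / p : ℕ) : ℝ) ^ 2 ≤ ((N : ℝ) / (p : ℝ)) ^ 2 := by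
        apply pow_le_pow_left₀ hnn hdiv
      refine this.trans (le_of_eq ?_)
      field_simp
    have h3 : ∑ p ∈ P, (N : ℝ) ^ 2 * (1 / (p : ℝ) ^ 2) ≤ (N : ℝ) ^ 2 * (35 / 72) := by
      rw [← Finset.mul_sum]
      apply mul_le_mul_of_nonneg_left _ (by positivity)
      exact prime_sq_sum_le P (fun p hp => (Finset.mem_filter.mp hp).2)
    calc (bad.card : ℝ) ≤ ((∑ p ∈ P, (N / p) ^ 2 : ℕ) : ℝ) := by exact_mod_cast h1
      _ ≤ ∑ p ∈ P, (N : ℝ) ^ 2 * (1 / (p : ℝ) ^ 2) := h2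
      _ ≤ (N : ℝ) ^ 2 * (35 / 72) := h3
      _ = 35 / 72 * (N : ℝ) ^ 2 := by ring
  have hN2 : (0 : ℝ) < (N : ℝ) ^ 2 := by positivity
  have hgood : ((S.filter (fun p => Nat.gcd p.1 p.2 = 1)).card : ℝ)
      = (N : ℝ) ^ 2 - (bad.card : ℝ) := by
    have h : ((S.filter (fun p => Nat.gcd p.1 p.2 = 1)).card : ℝ) + (bad.card : ℝ)
        = (N : ℝ) ^ 2 := by exact_mod_cast hsplit
    linarith
  rw [div_lt_div_iff₀ (by norm_num) hN2] at *
  rw [hgood]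
  nlinarith [hN2, hbadcard]
end

section
/- Let n ≥ 2, J ⊆ {0,...,n-1} nonempty, δ real with |δ| < 1, and θ : J → ℝ a function with |θ_j| ≤ n/32 for all j ∈ J. Suppose |J| ≥ n(1 - sinc(δ))/(1 - 2 sin(π/32)). Then (1/|J|²)·|Σ_{j∈J} e^{2πi(δj + θ_j)/n}|² ≥ (1 - 2 sin(π/32) - (1 - sinc(δ))·n/|J|)². -/
/-!
Write `S`, `T` and `F` for the sums of the perturbed terms over `J`, of the unperturbed terms
`ζ ^ j` (`ζ = exp (2πiδ/n)`) over `J`, and of `ζ ^ j` over all of `range n`. Each perturbation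
factor `exp (iφ)` with `|φ| ≤ 2π/32` lies within `2 sin (π/32)` of `1`, so
`‖S - T‖ ≤ 2 sin (π/32) |J|`; the missing terms give `‖F - T‖ ≤ n - |J|`; and the Dirichlet kernel
`‖F‖ = |sin (πδ)| / |sin (πδ/n)|` is at least `n |sinc δ|` because `|sin x| ≤ |x|`. The triangle
inequality yields `‖S‖ ≥ |J| (1 - 2 sin (π/32)) - n (1 - sinc δ)`, which the hypothesis on `|J|`
makes nonnegative, so it may be squared.
-/

open Finset

/-- The normalized sinc function `sinc δ = sin(πδ)/(πδ)` with `sinc 0 = 1`. -/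
noncomputable def sinc (δ : ℝ) : ℝ :=
  if δ = 0 then 1 else Real.sin (Real.pi * δ) / (Real.pi * δ)

open Complex
open scoped Real

lemma sinc_eq_sinc_pi_mul (δ : ℝ) : sinc δ = Real.sinc (π * δ) := by
  simp [sinc, Real.sinc, Real.pi_ne_zero]

lemma norm_exp_I_mul_ofReal_sub_one_le_of_abs_le {x a : ℝ} (hx : |x| ≤ 2 * a) (ha : a ≤ π / 2) :
    ‖cexp (I * x) - 1‖ ≤ 2 * Real.sin a := by
  have hx2 : |x / 2| ≤ a := by rw [abs_div, abs_two]; linarith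
  rw [norm_exp_I_mul_ofReal_sub_one, norm_mul, Real.norm_eq_abs, Real.norm_eq_abs, abs_two,
    Real.abs_sin_eq_sin_abs_of_abs_le_pi (by linarith [Real.pi_pos])]
  gcongr
  exact Real.sin_le_sin_of_le_of_le_pi_div_two (by linarith [abs_nonneg (x / 2), Real.pi_pos])
    ha hx2

lemma norm_geom_sum_exp_I_mul (x : ℝ) (n : ℕ) (h : cexp (I * x) ≠ 1) :
    ‖∑ j ∈ range n, cexp (I * x) ^ j‖ = |Real.sin (n * x / 2)| / |Real.sin (x / 2)| := by
  have hpow : cexp (I * x) ^ n = cexp (I * ↑(n * x)) := by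
    rw [← Complex.exp_nat_mul]; push_cast; ring_nf
  simp only [geom_sum_eq h, norm_div, hpow, norm_exp_I_mul_ofReal_sub_one, norm_mul,
    Real.norm_eq_abs, abs_two]
  exact mul_div_mul_left _ _ two_ne_zero

lemma natCast_mul_abs_sinc_le_norm_geom_sum (n : ℕ) (δ : ℝ) :
    n * |sinc δ| ≤ ‖∑ j ∈ range n, cexp (I * ↑(2 * π * δ / n)) ^ j‖ := by
  by_cases h : cexp (I * ↑(2 * π * δ / n)) = 1
  · rw [h]
    simpa using mul_le_of_le_one_right n.cast_nonneg
      ((sinc_eq_sinc_pi_mul δ).symm ▸ Real.abs_sinc_le_one (π * δ))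
  have hn : (n : ℝ) ≠ 0 := by rintro hn; simp [hn] at h
  have hδ : δ ≠ 0 := by rintro rfl; simp at h
  have hhalf : 2 * π * δ / n / 2 = π * δ / n := by ring
  have hsin : Real.sin (π * δ / n) ≠ 0 := by
    intro hsin
    apply h
    rw [← sub_eq_zero, ← norm_eq_zero, norm_exp_I_mul_ofReal_sub_one, hhalf, hsin, mul_zero,
      norm_zero]
  rw [norm_geom_sum_exp_I_mul _ _ h, sinc, if_neg hδ, abs_div, hhalf,
    show (n : ℝ) * (2 * π * δ / n) / 2 = π * δ by field_simp]
  calc (n : ℝ) * (|Real.sin (π * δ)| / |π * δ|)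
      = |Real.sin (π * δ)| / |π * δ / n| := by
        rw [abs_div, Nat.abs_cast]; field_simp
    _ ≤ |Real.sin (π * δ)| / |Real.sin (π * δ / n)| :=
        div_le_div_of_nonneg_left (abs_nonneg _) (abs_pos.mpr hsin) Real.abs_sin_le_abs

lemma norm_sum_sub_sum_le_card_sub {ι E : Type*} [DecidableEq ι] [SeminormedAddCommGroup E]
    {J K : Finset ι} (hJK : J ⊆ K) {u : ι → E} (hu : ∀ i ∈ K, ‖u i‖ ≤ 1) :
    ‖∑ i ∈ K, u i - ∑ i ∈ J, u i‖ ≤ #K - #J := by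
  rw [← sum_sdiff_eq_sub hJK, ← Nat.cast_sub (card_le_card hJK), ← card_sdiff_of_subset hJK]
  simpa using norm_sum_le_of_le (K \ J) fun i hi ↦ hu i (mem_sdiff.mp hi).1

lemma norm_sum_mul_sub_sum_le {ι R : Type*} [SeminormedRing R] (J : Finset ι) {u v : ι → R}
    {ε : ℝ} (hu : ∀ i ∈ J, ‖u i‖ ≤ 1) (hv : ∀ i ∈ J, ‖v i - 1‖ ≤ ε) :
    ‖∑ i ∈ J, u i * v i - ∑ i ∈ J, u i‖ ≤ #J * ε := by
  rw [← sum_sub_distrib]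
  simpa using norm_sum_le_of_le J fun i hi ↦ calc
    ‖u i * v i - u i‖ = ‖u i * (v i - 1)‖ := by rw [mul_sub, mul_one]
    _ ≤ ‖u i‖ * ‖v i - 1‖ := norm_mul_le _ _
    _ ≤ 1 * ε := mul_le_mul (hu i hi) (hv i hi) (norm_nonneg _) zero_le_one
    _ = ε := one_mul ε

lemma card_mul_sub_le_norm_perturbed_geom_sum {n : ℕ} {J : Finset ℕ} (hJ : J ⊆ range n)
    (δ : ℝ) {φ : ℕ → ℝ} {a : ℝ} (hφ : ∀ j ∈ J, |φ j| ≤ 2 * a) (ha : a ≤ π / 2) :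
    #J * (1 - 2 * Real.sin a) - n * (1 - sinc δ) ≤
      ‖∑ j ∈ J, cexp (I * ↑(2 * π * δ / n)) ^ j * cexp (I * φ j)‖ := by
  set u : ℕ → ℂ := fun j ↦ cexp (I * ↑(2 * π * δ / n)) ^ j
  have hu : ∀ j, ‖u j‖ ≤ 1 := fun j ↦ by rw [norm_pow, norm_exp_I_mul_ofReal, one_pow]
  have hperturbed := norm_sum_mul_sub_sum_le J (fun j _ ↦ hu j) fun j hj ↦
    norm_exp_I_mul_ofReal_sub_one_le_of_abs_le (hφ j hj) ha
  have hmissing := norm_sum_sub_sum_le_card_sub hJ (u := u) fun j _ ↦ hu j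
  rw [card_range] at hmissing
  have hcomplete : n * sinc δ ≤ ‖∑ j ∈ range n, u j‖ :=
    (mul_le_mul_of_nonneg_left (le_abs_self _) n.cast_nonneg).trans
      (natCast_mul_abs_sinc_le_norm_geom_sum n δ)
  have hfull := norm_sub_norm_le (∑ j ∈ range n, u j) (∑ j ∈ J, u j)
  have hpartial := norm_sub_norm_le (∑ j ∈ J, u j) (∑ j ∈ J, u j * cexp (I * φ j))
  rw [norm_sub_rev] at hpartial
  linarith

theorem perturbed_geom_sum_missing_terms_general (n : ℕ) (J : Finset ℕ)
    (hJ : J ⊆ Finset.range n) (hne : J.Nonempty) (δ : ℝ)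
    (θ : ℕ → ℝ) (hθ : ∀ j ∈ J, |θ j| ≤ (n : ℝ) / 32)
    (hcard : (n : ℝ) * (1 - sinc δ) / (1 - 2 * Real.sin (Real.pi / 32)) ≤ (J.card : ℝ)) :
    (1 - 2 * Real.sin (Real.pi / 32) - (1 - sinc δ) * n / (J.card : ℝ)) ^ 2 ≤
      (1 / (J.card : ℝ) ^ 2) *
        ‖∑ j ∈ J,
          Complex.exp (2 * Real.pi * Complex.I * (δ * j + θ j) / n)‖ ^ 2 := by
  obtain ⟨j₀, hj₀⟩ := hne
  have hn : (0 : ℝ) < n := by exact_mod_cast (Nat.zero_le j₀).trans_lt (mem_range.mp (hJ hj₀))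
  have hm : (0 : ℝ) < #J := by exact_mod_cast card_pos.mpr ⟨j₀, hj₀⟩
  have hs : 2 * Real.sin (π / 32) < 1 := by
    linarith [Real.sin_le (x := π / 32) (by positivity), Real.pi_lt_four]
  have hphase : ∀ j ∈ J, |2 * π * θ j / n| ≤ 2 * (π / 32) := fun j hj ↦ by
    rw [abs_div, abs_mul, abs_of_pos Real.two_pi_pos, Nat.abs_cast, div_le_iff₀ hn]
    nlinarith [hθ j hj, Real.pi_pos]
  have hlower := card_mul_sub_le_norm_perturbed_geom_sum hJ δ hphase (by linarith [Real.pi_pos])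
  have hterm : ∀ j ∈ J, cexp (2 * π * I * (δ * j + θ j) / n) =
      cexp (I * ↑(2 * π * δ / n)) ^ j * cexp (I * ↑(2 * π * θ j / n)) := fun j _ ↦ by
    rw [← Complex.exp_nat_mul, ← Complex.exp_add]; push_cast; ring_nf
  rw [sum_congr rfl hterm]
  set S := ∑ j ∈ J, cexp (I * ↑(2 * π * δ / n)) ^ j * cexp (I * ↑(2 * π * θ j / n))
  rw [div_le_iff₀ (sub_pos.2 hs)] at hcard
  have hnormalized : 1 - 2 * Real.sin (π / 32) - (1 - sinc δ) * n / #J ≤ ‖S‖ / #J := by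
    rw [le_div_iff₀ hm, sub_mul, div_mul_cancel₀ _ hm.ne']
    linarith
  have hnonneg : 0 ≤ 1 - 2 * Real.sin (π / 32) - (1 - sinc δ) * n / #J := by
    rw [sub_nonneg, div_le_iff₀ hm]
    linarith
  calc _ ≤ (‖S‖ / #J) ^ 2 := pow_le_pow_left₀ hnonneg hnormalized 2
    _ = _ := by ring

/-- Perturbed geometric sums with missing terms. -/
theorem perturbed_geom_sum_missing_terms (n : ℕ) (hn : 2 ≤ n) (J : Finset ℕ)
    (hJ : J ⊆ Finset.range n) (hne : J.Nonempty) (δ : ℝ) (hδ : |δ| < 1)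
    (θ : ℕ → ℝ) (hθ : ∀ j ∈ J, |θ j| ≤ (n : ℝ) / 32)
    (hcard : (n : ℝ) * (1 - sinc δ) / (1 - 2 * Real.sin (Real.pi / 32)) ≤ (J.card : ℝ)) :
    (1 - 2 * Real.sin (Real.pi / 32) - (1 - sinc δ) * n / (J.card : ℝ)) ^ 2 ≤
      (1 / (J.card : ℝ) ^ 2) *
        ‖∑ j ∈ J,
          Complex.exp (2 * Real.pi * Complex.I * (δ * j + θ j) / n)‖ ^ 2 :=
  perturbed_geom_sum_missing_terms_general n J hJ hne δ θ hθ hcard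
end

section
/- Let S > 2 be real, q ≥ S² a positive integer, k ≥ 1 an integer with k < ⌊S/32⌋, and c = kq/S + ε_c with |ε_c| ≤ 1/2 and c > 0. Define Ŝ = kq/c. Then |S - Ŝ| ≤ 1. -/
/-- The candidate period `Ŝ = kq/c` recovered from a good Fourier sample
`c = kq/S + ε_c` is within `1` of the true period `S`. -/
theorem candidate_period_close (S : ℝ) (q : ℕ) (k : ℕ) (εc c : ℝ)
    (hS : 2 < S) (hq : S ^ 2 ≤ q) (hq0 : 0 < q)
    (hk : 1 ≤ k) (hkS : (k : ℝ) < ⌊S / 32⌋)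
    (hεc : |εc| ≤ 1 / 2) (hc : c = k * q / S + εc) (hc0 : 0 < c) :
    |S - k * q / c| ≤ 1 := by
  have hS0 : (0:ℝ) < S := by linarith
  have h1k : (1:ℝ) ≤ (k:ℝ) := by exact_mod_cast hk
  have hqS : S ^ 2 ≤ (q:ℝ) := hq
  have hK : S ^ 2 ≤ (k:ℝ) * q := by nlinarith
  have habs := abs_le.mp hεc
  have hcS : S / 2 ≤ c := by
    have hdiv : S ≤ (k:ℝ) * q / S := by
      rw [le_div_iff₀ hS0]; nlinarith
    linarith [habs.1, hc ▸ le_refl c, hdiv]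
  have hcS' : S / 2 ≤ c := hcS
  have hSne : S ≠ 0 := ne_of_gt hS0
  have hcne : c ≠ 0 := ne_of_gt hc0
  have hDc : S * c = S * εc + (k:ℝ) * q := by
    rw [hc]; field_simp; ring
  have hkey : S - (k:ℝ) * q / c = S * εc / c := by
    field_simp
    linear_combination hDc
  rw [hkey, abs_div, abs_of_pos hc0, abs_mul, abs_of_pos hS0, div_le_one hc0]
  nlinarith [habs.2]
end
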